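/- Let (S,·,⁻¹) be a finite combinatorial inverse semigroup and let p ≥ 2 be such that x^p = x^{p+1} for all x ∈ S (so the natural partial order on S is a meet-semilattice and (S, +_nat, ·) is an ai-semiring). If the 6-element Brandt monoid B_2^1 satisfies every inverse semigroup identity satisfied by (S,·,⁻¹), then the ai-semiring (B_2^1, +_nat, ·) satisfies every semiring identity satisfied by (S, +_nat, ·). -/

import Mathlib

universe u v

/-- An inverse semigroup: every element has a unique (generalized) inverse. -/
class InverseSemigroup (S : Type*) extends Semigroup S, Inv S where
  mul_inv_mul : ∀ x : S, x * x⁻¹ * x = x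
  inv_mul_inv : ∀ x : S, x⁻¹ * x * x⁻¹ = x⁻¹
  inv_unique : ∀ x y : S, x * y * x = x → y * x * y = y → y = x⁻¹

/-- Terms in the signature `{·, ⁻¹}` over countably many variables. -/
inductive InvTerm : Type
  | var : ℕ → InvTerm
  | mul : InvTerm → InvTerm → InvTerm
  | inv : InvTerm → InvTerm

/-- Evaluation of a `{·, ⁻¹}`-term under explicit operations and an assignment. -/
def InvTerm.evalOp {S : Type*} (mul : S → S → S) (inv : S → S) (ρ : ℕ → S) : InvTerm → S
  | .var i => ρ i
  | .mul u v => mul (u.evalOp mul inv ρ) (v.evalOp mul inv ρ)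
  | .inv u => inv (u.evalOp mul inv ρ)

/-- The algebra `(S, ·, ⁻¹)` satisfies the inverse semigroup identity `e.1 ≈ e.2`. -/
def SatInv (S : Type*) [Mul S] [Inv S] (e : InvTerm × InvTerm) : Prop :=
  ∀ ρ : ℕ → S, e.1.evalOp (· * ·) (·⁻¹) ρ = e.2.evalOp (· * ·) (·⁻¹) ρ

/-- The subalgebra with carrier `T` of `(S, mul, inv)` satisfies the identity `e.1 ≈ e.2`. -/
def SatInvOn {S : Type*} (T : Set S) (mul : S → S → S) (inv : S → S)
    (e : InvTerm × InvTerm) : Prop :=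
  ∀ ρ : ℕ → S, (∀ i, ρ i ∈ T) → e.1.evalOp mul inv ρ = e.2.evalOp mul inv ρ

/-- A subset of a semigroup which is a subgroup (a group under the induced multiplication). -/
def IsSubgroupSet {S : Type*} [Mul S] (H : Set S) : Prop :=
  H.Nonempty ∧ (∀ a ∈ H, ∀ b ∈ H, a * b ∈ H) ∧
    ∃ e ∈ H, (∀ a ∈ H, e * a = a ∧ a * e = a) ∧ ∀ a ∈ H, ∃ b ∈ H, a * b = e ∧ b * a = e

/-- A semigroup is combinatorial if all of its subgroups are trivial. -/
def Combinatorial (S : Type*) [Mul S] : Prop :=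
  ∀ H : Set S, IsSubgroupSet H → ∀ a ∈ H, ∀ b ∈ H, a = b

/-- The natural partial order of an inverse semigroup: `x ≤ y` iff `x = x x⁻¹ y`. -/
def natLe {S : Type*} [Mul S] [Inv S] (x y : S) : Prop := x = x * x⁻¹ * y

/-- `z` is the greatest lower bound (meet) of `x` and `y` with respect to `le`. -/
def IsMeetWrt {S : Type*} (le : S → S → Prop) (x y z : S) : Prop :=
  le z x ∧ le z y ∧ ∀ w, le w x → le w y → le w z

/-- `spowM x k = x^(k+1)`, the `(k+1)`-st power in a semigroup. -/
def spowM {S : Type*} [Mul S] (x : S) : ℕ → S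
  | 0 => x
  | k + 1 => spowM x k * x

/-- Terms in the signature `{+, ·}` over countably many variables. -/
inductive SRTerm : Type
  | var : ℕ → SRTerm
  | add : SRTerm → SRTerm → SRTerm
  | mul : SRTerm → SRTerm → SRTerm

/-- Evaluation of a `{+, ·}`-term under explicit operations and an assignment. -/
def SRTerm.evalOp {S : Type*} (add mul : S → S → S) (ρ : ℕ → S) : SRTerm → S
  | .var i => ρ i
  | .add u v => add (u.evalOp add mul ρ) (v.evalOp add mul ρ)
  | .mul u v => mul (u.evalOp add mul ρ) (v.evalOp add mul ρ)

/-- `(S, add, mul)` is an additively idempotent semiring. -/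
structure IsAiSemiring {S : Type*} (add mul : S → S → S) : Prop where
  add_assoc : ∀ a b c, add (add a b) c = add a (add b c)
  add_comm : ∀ a b, add a b = add b a
  add_idem : ∀ a, add a a = a
  mul_assoc : ∀ a b c, mul (mul a b) c = mul a (mul b c)
  left_distrib : ∀ a b c, mul a (add b c) = add (mul a b) (mul a c)
  right_distrib : ∀ a b c, mul (add a b) c = add (mul a c) (mul b c)

/-- The algebra `(S, add, mul)` satisfies the semiring identity `e.1 ≈ e.2`. -/
def SatSR {S : Type*} (add mul : S → S → S) (e : SRTerm × SRTerm) : Prop :=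
  ∀ ρ : ℕ → S, e.1.evalOp add mul ρ = e.2.evalOp add mul ρ

/-- The subalgebra of `(S, add, mul)` with carrier `T` satisfies the identity `e.1 ≈ e.2`. -/
def SatSROn {S : Type*} (T : Set S) (add mul : S → S → S) (e : SRTerm × SRTerm) : Prop :=
  ∀ ρ : ℕ → S, (∀ i, ρ i ∈ T) → e.1.evalOp add mul ρ = e.2.evalOp add mul ρ

/-- The 6-element Brandt monoid `B₂¹`: the zero matrix, the four matrix units, and the
identity matrix, among zero-one `2 × 2` matrices. -/
def B21 : Set (Matrix (Fin 2) (Fin 2) ℕ) :=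
  {0, Matrix.single 0 0 1, Matrix.single 0 1 1,
    Matrix.single 1 0 1, Matrix.single 1 1 1, 1}

/-- The Hadamard (entrywise) product of matrices. -/
def hprod {t : ℕ} (A B : Matrix (Fin t) (Fin t) ℕ) : Matrix (Fin t) (Fin t) ℕ :=
  Matrix.of fun i j => A i j * B i j

/-!
In an inverse semigroup with `x^p = x^(p+1)`, the element `(x⁻¹ y)^p` is an idempotent and
`x (x⁻¹ y)^p` is the meet of `x` and `y` in the natural order. In `B₂¹`, where `A³ = A²`, the
Hadamard product is given by the same term: `A ∘ B = A (Aᵀ B)^p`. Hence `u + v ↦ u (u⁻¹ v)^p`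
translates semiring terms into inverse semigroup terms that compute the same values in both
`(S, +_nat, ·)` and `(B₂¹, +_nat, ·)`, so a semiring identity of `S` becomes an inverse semigroup
identity of `S`, which `B₂¹` satisfies by hypothesis.
-/

section spowM

variable {M : Type*} [Semigroup M]

theorem spowM_mul_spowM (x : M) (m n : ℕ) :
    spowM x m * spowM x n = spowM x (m + n + 1) := by
  induction n with
  | zero => rfl
  | succ n ih => rw [spowM, spowM, ← mul_assoc, ih]; rfl

theorem spowM_add_of_mul_eq {x : M} {m : ℕ} (h : spowM x m * x = spowM x m) :
    ∀ j, spowM x (m + j) = spowM x m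
  | 0 => rfl
  | j + 1 => by rw [← add_assoc, spowM, spowM_add_of_mul_eq h j, h]

theorem isIdempotentElem_spowM_of_mul_eq {x : M} {m : ℕ} (h : spowM x m * x = spowM x m) :
    IsIdempotentElem (spowM x m) := by
  rw [IsIdempotentElem, spowM_mul_spowM, add_assoc]
  exact spowM_add_of_mul_eq h _

theorem mul_spowM_of_mul_eq {w z : M} (h : w * z = w) : ∀ k, w * spowM z k = w
  | 0 => h
  | k + 1 => by rw [spowM, ← mul_assoc, mul_spowM_of_mul_eq h k, h]

end spowM

namespace InverseSemigroup

variable {S : Type*} [InverseSemigroup S]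

theorem inv_inv (x : S) : x⁻¹⁻¹ = x :=
  (inv_unique x⁻¹ x (inv_mul_inv x) (mul_inv_mul x)).symm

theorem isIdempotentElem_mul_inv (x : S) : IsIdempotentElem (x * x⁻¹) := by
  rw [IsIdempotentElem, ← mul_assoc, mul_inv_mul]

theorem isIdempotentElem_inv_mul (x : S) : IsIdempotentElem (x⁻¹ * x) := by
  rw [IsIdempotentElem, ← mul_assoc, inv_mul_inv]

theorem inv_eq_self_of_isIdempotentElem {e : S} (he : IsIdempotentElem e) : e⁻¹ = e :=
  (inv_unique e e (by rw [he.eq, he.eq]) (by rw [he.eq, he.eq])).symm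

/-- The inverse `g` of `e * f` is also an inverse of `e * f` in the form `f * g * e`, which
makes `g` idempotent, and then so is `e * f = g⁻¹`. -/
theorem isIdempotentElem_mul {e f : S} (he : IsIdempotentElem e) (hf : IsIdempotentElem f) :
    IsIdempotentElem (e * f) := by
  have hg : f * (e * f)⁻¹ * e = (e * f)⁻¹ := by
    refine inv_unique (e * f) _ ?_ ?_
    · calc e * f * (f * (e * f)⁻¹ * e) * (e * f) = e * f * (e * f)⁻¹ * (e * f) := by
            simp only [mul_assoc, he.mul_self_mul, hf.mul_self_mul]
        _ = e * f := mul_inv_mul _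
    · calc f * (e * f)⁻¹ * e * (e * f) * (f * (e * f)⁻¹ * e)
            = f * ((e * f)⁻¹ * (e * f) * (e * f)⁻¹) * e := by
            simp only [mul_assoc, he.mul_self_mul, hf.mul_self_mul]
        _ = f * (e * f)⁻¹ * e := by rw [inv_mul_inv]
  have hg_idem : IsIdempotentElem (e * f)⁻¹ := by
    calc (e * f)⁻¹ * (e * f)⁻¹ = f * (e * f)⁻¹ * e * (f * (e * f)⁻¹ * e) := by rw [hg]
      _ = f * ((e * f)⁻¹ * (e * f) * (e * f)⁻¹) * e := by simp only [mul_assoc]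
      _ = (e * f)⁻¹ := by rw [inv_mul_inv, hg]
  rwa [← inv_inv (e * f), inv_eq_self_of_isIdempotentElem hg_idem]

theorem commute_of_isIdempotentElem {e f : S} (he : IsIdempotentElem e)
    (hf : IsIdempotentElem f) : Commute e f := by
  have hef := isIdempotentElem_mul he hf
  have hfe : f * e = (e * f)⁻¹ := by
    refine inv_unique (e * f) _ ?_ ?_
    · calc e * f * (f * e) * (e * f) = e * f * (e * f) := by
            simp only [mul_assoc, he.mul_self_mul, hf.mul_self_mul]
        _ = e * f := hef.eq
    · calc f * e * (e * f) * (f * e) = f * e * (f * e) := by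
            simp only [mul_assoc, he.mul_self_mul, hf.mul_self_mul]
        _ = f * e := (isIdempotentElem_mul hf he).eq
  rw [Commute, SemiconjBy, hfe, inv_eq_self_of_isIdempotentElem hef]

theorem mul_inv_rev (x y : S) : (x * y)⁻¹ = y⁻¹ * x⁻¹ := by
  have hc : y * y⁻¹ * (x⁻¹ * x) = x⁻¹ * x * (y * y⁻¹) :=
    commute_of_isIdempotentElem (isIdempotentElem_mul_inv y) (isIdempotentElem_inv_mul x)
  refine (inv_unique (x * y) _ ?_ ?_).symm
  · calc x * y * (y⁻¹ * x⁻¹) * (x * y) = x * (y * y⁻¹ * (x⁻¹ * x)) * y := by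
          simp only [mul_assoc]
      _ = x * x⁻¹ * x * (y * y⁻¹ * y) := by rw [hc]; simp only [mul_assoc]
      _ = x * y := by rw [mul_inv_mul, mul_inv_mul]
  · calc y⁻¹ * x⁻¹ * (x * y) * (y⁻¹ * x⁻¹)
          = y⁻¹ * (x⁻¹ * x * (y * y⁻¹)) * x⁻¹ := by
          simp only [mul_assoc]
      _ = y⁻¹ * y * y⁻¹ * (x⁻¹ * x * x⁻¹) := by rw [← hc]; simp only [mul_assoc]
      _ = y⁻¹ * x⁻¹ := by rw [inv_mul_inv, inv_mul_inv]

theorem natLe_antisymm {x y : S} (hxy : natLe x y) (hyx : natLe y x) : x = y := by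
  have hc : Commute (x * x⁻¹) (y * y⁻¹) :=
    commute_of_isIdempotentElem (isIdempotentElem_mul_inv x) (isIdempotentElem_mul_inv y)
  calc x = x * x⁻¹ * (y * y⁻¹ * x) := by rw [← hyx, ← hxy]
    _ = y * y⁻¹ * (y * y⁻¹) * (x * x⁻¹ * x) := by
      rw [(isIdempotentElem_mul_inv y).eq, ← mul_assoc, hc.eq, mul_assoc (y * y⁻¹)]
    _ = y := by rw [(isIdempotentElem_mul_inv y).eq, mul_inv_mul, ← hyx]

theorem eq_of_isMeetWrt_natLe {x y z z' : S} (h : IsMeetWrt natLe x y z)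
    (h' : IsMeetWrt natLe x y z') : z = z' :=
  natLe_antisymm (h'.2.2 z h.1 h.2.1) (h.2.2 z' h'.1 h'.2.1)

theorem natLe_mul_of_isIdempotentElem (x : S) {e : S} (he : IsIdempotentElem e) :
    natLe (x * e) x := by
  have hc := commute_of_isIdempotentElem he (isIdempotentElem_inv_mul x)
  calc x * e = x * x⁻¹ * x * e := by rw [mul_inv_mul]
    _ = x * (e * (x⁻¹ * x)) := by rw [hc.eq]; simp only [mul_assoc]
    _ = x * e * (x * e)⁻¹ * x := by
      rw [mul_inv_rev, inv_eq_self_of_isIdempotentElem he]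
      simp only [mul_assoc, he.mul_self_mul]

theorem natLe_mul_of_mul_inv_mul_eq {x y e : S} (he : IsIdempotentElem e)
    (hey : e * (x⁻¹ * y) = e) : natLe (x * e) y := by
  calc x * e = x * (e * (e * (x⁻¹ * y))) := by rw [he.mul_self_mul, hey]
    _ = x * e * (x * e)⁻¹ * y := by
      rw [mul_inv_rev, inv_eq_self_of_isIdempotentElem he]
      simp only [mul_assoc]

theorem mul_inv_mul_eq_of_natLe {w x y : S} (hx : natLe w x) (hy : natLe w y) :
    w * (x⁻¹ * y) = w := by
  have hc : Commute (w * w⁻¹) (x * x⁻¹) :=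
    commute_of_isIdempotentElem (isIdempotentElem_mul_inv w) (isIdempotentElem_mul_inv x)
  calc w * (x⁻¹ * y) = w * w⁻¹ * (x * x⁻¹) * y := by
        conv_lhs => rw [hx]
        simp only [mul_assoc]
    _ = x * x⁻¹ * (w * w⁻¹ * y) := by rw [hc.eq, mul_assoc]
    _ = x * x⁻¹ * (w * w⁻¹ * x) := by rw [← hy, ← hx]
    _ = w * w⁻¹ * (x * x⁻¹ * x) := by
      rw [← mul_assoc (x * x⁻¹), ← hc.eq]
      simp only [mul_assoc]
    _ = w := by rw [mul_inv_mul, ← hx]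

/-- `e = (x⁻¹ y)^(q+1)` is an idempotent with `e x⁻¹ y = e`, and every lower bound `w` of `x`
and `y` satisfies `w x⁻¹ y = w`, hence `w = w e ≤ x e`. -/
theorem isMeetWrt_natLe_mul_spowM {x y : S} {q : ℕ}
    (h : spowM (x⁻¹ * y) q * (x⁻¹ * y) = spowM (x⁻¹ * y) q) :
    IsMeetWrt natLe x y (x * spowM (x⁻¹ * y) q) := by
  have he := isIdempotentElem_spowM_of_mul_eq h
  refine ⟨natLe_mul_of_isIdempotentElem x he, natLe_mul_of_mul_inv_mul_eq he h, ?_⟩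
  intro w hx hy
  calc w = w * spowM (x⁻¹ * y) q :=
        (mul_spowM_of_mul_eq (mul_inv_mul_eq_of_natLe hx hy) q).symm
    _ = w * w⁻¹ * (x * spowM (x⁻¹ * y) q) := by
        conv_lhs => rw [hx]
        rw [mul_assoc]

end InverseSemigroup

def InvTerm.spowM (t : InvTerm) : ℕ → InvTerm
  | 0 => t
  | k + 1 => .mul (t.spowM k) t

theorem InvTerm.evalOp_spowM {M : Type*} [Mul M] (inv : M → M) (ρ : ℕ → M) (t : InvTerm) :
    ∀ k, (t.spowM k).evalOp (· * ·) inv ρ = _root_.spowM (t.evalOp (· * ·) inv ρ) k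
  | 0 => rfl
  | k + 1 => by rw [InvTerm.spowM, InvTerm.evalOp, InvTerm.evalOp_spowM inv ρ t k]; rfl

def SRTerm.toInvTerm (k : ℕ) : SRTerm → InvTerm
  | .var i => .var i
  | .mul u v => .mul (u.toInvTerm k) (v.toInvTerm k)
  | .add u v =>
    .mul (u.toInvTerm k) ((InvTerm.mul (.inv (u.toInvTerm k)) (v.toInvTerm k)).spowM k)

section Translation

variable {M : Type*} {T : Set M} {add : M → M → M}

theorem SRTerm.evalOp_mem {mul : M → M → M} (hadd : ∀ x ∈ T, ∀ y ∈ T, add x y ∈ T)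
    (hmul : ∀ x ∈ T, ∀ y ∈ T, mul x y ∈ T) {ρ : ℕ → M} (hρ : ∀ i, ρ i ∈ T) :
    ∀ t : SRTerm, t.evalOp add mul ρ ∈ T
  | .var i => hρ i
  | .add u v => hadd _ (u.evalOp_mem hadd hmul hρ) _ (v.evalOp_mem hadd hmul hρ)
  | .mul u v => hmul _ (u.evalOp_mem hadd hmul hρ) _ (v.evalOp_mem hadd hmul hρ)

theorem SRTerm.evalOp_toInvTerm [Mul M] {inv : M → M} {k : ℕ}
    (hadd_mem : ∀ x ∈ T, ∀ y ∈ T, add x y ∈ T) (hmul_mem : ∀ x ∈ T, ∀ y ∈ T, x * y ∈ T)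
    (hadd : ∀ x ∈ T, ∀ y ∈ T, add x y = x * spowM (inv x * y) k)
    {ρ : ℕ → M} (hρ : ∀ i, ρ i ∈ T) (t : SRTerm) :
    (t.toInvTerm k).evalOp (· * ·) inv ρ = t.evalOp add (· * ·) ρ := by
  induction t with
  | var i => rfl
  | mul u v ihu ihv => rw [toInvTerm, InvTerm.evalOp, ihu, ihv]; rfl
  | add u v ihu ihv =>
    rw [toInvTerm, InvTerm.evalOp, InvTerm.evalOp_spowM, InvTerm.evalOp, InvTerm.evalOp, ihu, ihv,
      evalOp, hadd _ (u.evalOp_mem hadd_mem hmul_mem hρ) _ (v.evalOp_mem hadd_mem hmul_mem hρ)]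

end Translation

open scoped Matrix

theorem B21_eq_coe_finset : B21 = ↑({0, Matrix.single 0 0 1, Matrix.single 0 1 1,
    Matrix.single 1 0 1, Matrix.single 1 1 1, 1} : Finset (Matrix (Fin 2) (Fin 2) ℕ)) := by
  simp [B21]

theorem mul_mem_B21 : ∀ A ∈ B21, ∀ B ∈ B21, A * B ∈ B21 := by
  rw [B21_eq_coe_finset]
  decide

theorem hprod_mem_B21 : ∀ A ∈ B21, ∀ B ∈ B21, hprod A B ∈ B21 := by
  rw [B21_eq_coe_finset]
  decide

theorem transpose_mem_B21 : ∀ A ∈ B21, Aᵀ ∈ B21 := by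
  rw [B21_eq_coe_finset]
  decide

theorem mul_mul_mul_self_of_mem_B21 : ∀ A ∈ B21, A * A * A = A * A := by
  rw [B21_eq_coe_finset]
  decide

theorem hprod_eq_mul_sq_of_mem_B21 :
    ∀ A ∈ B21, ∀ B ∈ B21, hprod A B = A * (Aᵀ * B * (Aᵀ * B)) := by
  rw [B21_eq_coe_finset]
  decide

theorem hprod_eq_mul_spowM_of_mem_B21 {A B : Matrix (Fin 2) (Fin 2) ℕ} (hA : A ∈ B21)
    (hB : B ∈ B21) (k : ℕ) : hprod A B = A * spowM (Aᵀ * B) (k + 1) := by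
  have hAB := mul_mem_B21 _ (transpose_mem_B21 A hA) B hB
  rw [add_comm, spowM_add_of_mul_eq (mul_mul_mul_self_of_mem_B21 _ hAB)]
  exact hprod_eq_mul_sq_of_mem_B21 A hA B hB

theorem brandt_semiring_covers_natural_semiring_general {S : Type u} [InverseSemigroup S]
    (p : ℕ) (hp : 2 ≤ p)
    (hpow : ∀ x : S, spowM x (p - 1) = spowM x p)
    (add : S → S → S) (hadd : ∀ x y : S, IsMeetWrt natLe x y (add x y))
    (hB : ∀ e : InvTerm × InvTerm, SatInv S e → SatInvOn B21 (· * ·) Matrix.transpose e) :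
    ∀ e : SRTerm × SRTerm, SatSR add (· * ·) e → SatSROn B21 hprod (· * ·) e := by
  obtain ⟨k, rfl⟩ : ∃ k, p = k + 2 := ⟨p - 2, by omega⟩
  intro e he ρ hρ
  have hS : ∀ x y : S, add x y = x * spowM (x⁻¹ * y) (k + 1) := fun x y =>
    InverseSemigroup.eq_of_isMeetWrt_natLe (hadd x y)
      (InverseSemigroup.isMeetWrt_natLe_mul_spowM (hpow (x⁻¹ * y)).symm)
  have hInv : SatInv S (e.1.toInvTerm (k + 1), e.2.toInvTerm (k + 1)) := fun σ => by
    have htr := SRTerm.evalOp_toInvTerm (T := Set.univ) (fun _ _ _ _ => trivial)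
      (fun _ _ _ _ => trivial) (fun x _ y _ => hS x y) (fun i => Set.mem_univ (σ i))
    simpa only [htr] using he σ
  have htr := SRTerm.evalOp_toInvTerm hprod_mem_B21 mul_mem_B21
    (fun _ hA _ hC => hprod_eq_mul_spowM_of_mem_B21 hA hC k) hρ
  rw [← htr, ← htr]
  exact hB _ hInv ρ hρ

/-- Let `S` be a finite combinatorial inverse semigroup with `x^p = x^(p+1)`
for all `x` (some `p ≥ 2`), and let `add` be the meet operation of the natural partial order.
If `B₂¹` satisfies every inverse semigroup identity of `S`, then the ai-semiring
`(B₂¹, +_nat, ·)` satisfies every semiring identity of `(S, +_nat, ·)`. -/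
theorem brandt_semiring_covers_natural_semiring {S : Type u} [InverseSemigroup S] [Finite S]
    (hcomb : Combinatorial S) (p : ℕ) (hp : 2 ≤ p)
    (hpow : ∀ x : S, spowM x (p - 1) = spowM x p)
    (add : S → S → S) (hadd : ∀ x y : S, IsMeetWrt natLe x y (add x y))
    (hB : ∀ e : InvTerm × InvTerm, SatInv S e → SatInvOn B21 (· * ·) Matrix.transpose e) :
    ∀ e : SRTerm × SRTerm, SatSR add (· * ·) e → SatSROn B21 hprod (· * ·) e :=
  brandt_semiring_covers_natural_semiring_general p hp hpow add hadd hB
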